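/- For every nontrivial tree T = (V,E) with maximum degree Δ(T) ≤ 3 (a binary tree) and leaf set L, ψ_q(T) = μ(T[V \ L]) + |L|. -/

import Mathlib

open Finset SimpleGraph
open scoped Classical

/-- The closed neighborhood `N[v]` of `v` in `G`, as a finset. -/
noncomputable def closedNbhd {V : Type*} [Fintype V] (G : SimpleGraph V) (v : V) : Finset V :=
  Finset.univ.filter fun u => u = v ∨ G.Adj u v

/-- The degree of `v` in `G`. -/
noncomputable def deg {V : Type*} [Fintype V] (G : SimpleGraph V) (v : V) : ℕ :=
  (Finset.univ.filter fun u => G.Adj v u).card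

/-- A coloring `c` is a quorum coloring if every vertex has at least half of its
closed neighborhood in its own color class. -/
noncomputable def IsQuorumColoring {V : Type*} [Fintype V] (G : SimpleGraph V) (c : V → ℕ) : Prop :=
  ∀ v : V, (closedNbhd G v).card ≤ 2 * ((closedNbhd G v).filter fun u => c u = c v).card

/-- Number of color classes (distinct used colors) of a coloring. -/
noncomputable def numClasses {V : Type*} [Fintype V] (c : V → ℕ) : ℕ :=
  (Finset.univ.image c).card

/-- The quorum coloring number `ψ_q(G)`. -/
noncomputable def quorumNumber {V : Type*} [Fintype V] (G : SimpleGraph V) : ℕ :=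
  sSup {k | ∃ c : V → ℕ, IsQuorumColoring G c ∧ numClasses c = k}

/-- A coloring is cost-effective if every vertex meets the quorum bound with equality:
`|N[v] ∩ π(v)| = ⌈|N[v]|/2⌉`. -/
noncomputable def IsCostEffective {V : Type*} [Fintype V] (G : SimpleGraph V) (c : V → ℕ) : Prop :=
  ∀ v : V, ((closedNbhd G v).filter fun u => c u = c v).card = ((closedNbhd G v).card + 1) / 2

/-- The matching number of a graph: the largest number of edges in a matching. -/
noncomputable def matchingNumber {W : Type*} (H : SimpleGraph W) : ℕ :=
  sSup {k | ∃ M : H.Subgraph, M.IsMatching ∧ M.edgeSet.ncard = k}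

/-! A quorum coloring of a graph of maximum degree at most 3 is exactly a coloring in which every
vertex of degree at least 2 shares its color with a neighbor; leaves are unconstrained.

Upper bound: colors carried by a leaf are at most `|L|`; every other color class consists of
internal vertices and therefore contains an edge of `T[V \ L]`, and edges of distinct classes are
disjoint, so they form a matching.

Lower bound: take a maximum matching `M` of `T[V \ L]`. Give every leaf and every edge of `M`
its own color. An unmatched internal vertex has no unmatched internal neighbor by maximality, so
it copies the color of a neighbor that is a leaf or matched. -/

section Quorum

variable {V : Type*} [Fintype V] {G : SimpleGraph V}

lemma card_closedNbhd (G : SimpleGraph V) (v : V) : #(closedNbhd G v) = deg G v + 1 := by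
  have : closedNbhd G v = insert v (univ.filter fun u => G.Adj v u) := by
    ext u
    simp [closedNbhd, G.adj_comm]
  rw [this, card_insert_of_notMem (by simp), deg]

lemma IsQuorumColoring.exists_adj_eq {c : V → ℕ} (hc : IsQuorumColoring G c) {v : V}
    (hv : 2 ≤ deg G v) : ∃ u, G.Adj v u ∧ c u = c v := by
  have hcard := hc v
  rw [card_closedNbhd] at hcard
  obtain ⟨u, hu, huv⟩ :=
    exists_mem_ne (s := (closedNbhd G v).filter fun u => c u = c v) (by omega) v
  simp only [closedNbhd, mem_filter, mem_univ, true_and] at hu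
  exact ⟨u, (hu.1.resolve_left huv).symm, hu.2⟩

lemma isQuorumColoring_of_forall_exists_adj_eq (hΔ : ∀ v, deg G v ≤ 3) {c : V → ℕ}
    (h : ∀ v, 2 ≤ deg G v → ∃ u, G.Adj v u ∧ c u = c v) : IsQuorumColoring G c := by
  intro v
  rw [card_closedNbhd]
  have hv : v ∈ (closedNbhd G v).filter fun u => c u = c v := by simp [closedNbhd]
  by_cases hdeg : 2 ≤ deg G v
  · obtain ⟨u, hvu, hcu⟩ := h v hdeg
    have hu : u ∈ (closedNbhd G v).filter fun u => c u = c v := by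
      simp [closedNbhd, hvu.symm, hcu]
    have := one_lt_card.2 ⟨u, hu, v, hv, hvu.ne'⟩
    have := hΔ v
    omega
  · have := card_pos.2 ⟨v, hv⟩
    omega

lemma numClasses_le_quorumNumber {c : V → ℕ} (hc : IsQuorumColoring G c) :
    numClasses c ≤ quorumNumber G :=
  le_csSup ⟨Fintype.card V, by rintro _ ⟨c, -, rfl⟩; exact card_image_le⟩ ⟨c, hc, rfl⟩

lemma quorumNumber_le {k : ℕ} (h : ∀ c, IsQuorumColoring G c → numClasses c ≤ k) :
    quorumNumber G ≤ k :=
  csSup_le ⟨_, fun _ => 0, fun v => by simp [two_mul], rfl⟩ (by rintro _ ⟨c, hc, rfl⟩; exact h c hc)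

lemma ncard_range_le_quorumNumber {α : Type*} [Countable α] (hΔ : ∀ v, deg G v ≤ 3)
    (κ : V → α) (hκ : ∀ v, 2 ≤ deg G v → ∃ u, G.Adj v u ∧ κ u = κ v) :
    (Set.range κ).ncard ≤ quorumNumber G := by
  obtain ⟨g, hg⟩ := Countable.exists_injective_nat α
  have hq : IsQuorumColoring G (g ∘ κ) := isQuorumColoring_of_forall_exists_adj_eq hΔ fun v hv => by
    obtain ⟨u, hvu, hu⟩ := hκ v hv
    exact ⟨u, hvu, congrArg g hu⟩
  calc (Set.range κ).ncard = (Set.range (g ∘ κ)).ncard := by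
        rw [Set.range_comp, Set.ncard_image_of_injective _ hg]
    _ = numClasses (g ∘ κ) := by
        rw [numClasses, ← Set.ncard_coe_finset, coe_image, coe_univ, Set.image_univ]
    _ ≤ quorumNumber G := numClasses_le_quorumNumber hq

end Quorum

section Matching

variable {W : Type*} [Finite W] {H : SimpleGraph W}

lemma bddAbove_ncard_edgeSet_isMatching (H : SimpleGraph W) :
    BddAbove {k | ∃ M : H.Subgraph, M.IsMatching ∧ M.edgeSet.ncard = k} :=
  ⟨Nat.card (Sym2 W), by rintro _ ⟨M, -, rfl⟩; exact Set.ncard_le_card _⟩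

lemma SimpleGraph.Subgraph.IsMatching.ncard_edgeSet_le_matchingNumber {M : H.Subgraph}
    (hM : M.IsMatching) : M.edgeSet.ncard ≤ matchingNumber H :=
  le_csSup (bddAbove_ncard_edgeSet_isMatching H) ⟨M, hM, rfl⟩

lemma exists_isMatching_ncard_eq_matchingNumber (H : SimpleGraph W) :
    ∃ M : H.Subgraph, M.IsMatching ∧ M.edgeSet.ncard = matchingNumber H ∧
      ∀ x y, H.Adj x y → x ∈ M.verts ∨ y ∈ M.verts := by
  have hempty : (⊥ : H.Subgraph).IsMatching := fun v hv => by simp at hv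
  obtain ⟨M, hM, hcard⟩ :
      matchingNumber H ∈ {k | ∃ M : H.Subgraph, M.IsMatching ∧ M.edgeSet.ncard = k} :=
    Nat.sSup_mem ⟨0, ⊥, hempty, by simp⟩ (bddAbove_ncard_edgeSet_isMatching H)
  refine ⟨M, hM, hcard, fun x y hxy => ?_⟩
  by_contra! hfree
  have hdisj : Disjoint M.support (H.subgraphOfAdj hxy).support := by
    rw [hM.support_eq_verts, support_subgraphOfAdj, Set.disjoint_right]
    rintro a (rfl | rfl)
    exacts [hfree.1, hfree.2]
  have hnew : s(x, y) ∉ M.edgeSet := fun h => hfree.1 (M.edge_vert h)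
  have hlarger := (hM.sup (.subgraphOfAdj hxy) hdisj).ncard_edgeSet_le_matchingNumber
  rw [Subgraph.edgeSet_sup, edgeSet_subgraphOfAdj, Set.union_singleton,
    Set.ncard_insert_of_notMem hnew, hcard] at hlarger
  exact Nat.not_succ_le_self _ hlarger

lemma card_le_matchingNumber_of_forall_exists_adj {ι : Type*} (col : W → ι) (s : Finset ι)
    (h : ∀ i ∈ s, ∃ x y, H.Adj x y ∧ col x = i ∧ col y = i) : #s ≤ matchingNumber H := by
  choose a b hab ha hb using fun i : s => h i i.2
  let M : H.Subgraph := ⨆ i, H.subgraphOfAdj (hab i)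
  have hcol (i : s) : ∀ w ∈ (H.subgraphOfAdj (hab i)).support, col w = i := by
    rw [support_subgraphOfAdj]
    rintro w (rfl | rfl)
    exacts [ha i, hb i]
  have hM : M.IsMatching := .iSup (fun i => .subgraphOfAdj _) fun i j hij =>
    Set.disjoint_left.2 fun w hi hj => hij <| Subtype.ext <| (hcol i w hi).symm.trans (hcol j w hj)
  have hinj : Function.Injective fun i : s => s(a i, b i) := by
    intro i j (hij : s(a i, b i) = s(a j, b j))
    have hai : a i ∈ s(a j, b j) := hij ▸ Sym2.mem_mk_left _ _
    refine Subtype.ext ?_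
    rw [← ha i]
    rcases Sym2.mem_iff.1 hai with h | h <;> rw [h]
    exacts [ha j, hb j]
  calc #s = (Set.range fun i : s => s(a i, b i)).ncard := by
        rw [Set.ncard_range_of_injective hinj, Nat.card_eq_fintype_card, Fintype.card_coe]
    _ = M.edgeSet.ncard := by simp [M, Set.iUnion_singleton_eq_range]
    _ ≤ matchingNumber H := hM.ncard_edgeSet_le_matchingNumber

end Matching

section Bounds

variable {V : Type*} [Fintype V] {G : SimpleGraph V}

lemma exists_isMatching_verts_subset_ncard_eq_matchingNumber_induce (G : SimpleGraph V)
    (s : Set V) :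
    ∃ M : G.Subgraph, M.IsMatching ∧ M.verts ⊆ s ∧
      M.edgeSet.ncard = matchingNumber (G.induce s) ∧
      ∀ x y, G.Adj x y → x ∈ s → y ∈ s → x ∈ M.verts ∨ y ∈ M.verts := by
  obtain ⟨M, hM, hcard, hcov⟩ := exists_isMatching_ncard_eq_matchingNumber (G.induce s)
  let f := Embedding.induce (G := G) s
  refine ⟨M.map f.toHom, hM.map f.toHom f.injective, ?_, ?_, fun x y hxy hx hy => ?_⟩
  · rintro _ ⟨w, -, rfl⟩
    exact w.2
  · rw [Subgraph.edgeSet_map]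
    exact (Set.ncard_image_of_injective _ (Sym2.map.injective f.injective)).trans hcard
  · exact (hcov ⟨x, hx⟩ ⟨y, hy⟩ hxy).imp (fun h => ⟨_, h, rfl⟩) fun h => ⟨_, h, rfl⟩

lemma numClasses_le_matchingNumber_add_card_leaves (hδ : ∀ v, ∃ u, G.Adj v u) {c : V → ℕ}
    (hc : IsQuorumColoring G c) :
    numClasses c ≤
      matchingNumber (G.induce {v | deg G v ≠ 1}) + #(univ.filter fun v => deg G v = 1) := by
  set L := univ.filter fun v => deg G v = 1
  have hinternal : #(univ.image c \ L.image c) ≤ matchingNumber (G.induce {v | deg G v ≠ 1}) := by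
    refine card_le_matchingNumber_of_forall_exists_adj (fun w : {v | deg G v ≠ 1} => c w) _
      fun t ht => ?_
    simp only [L, mem_sdiff, mem_image, mem_filter, mem_univ, true_and, not_exists, not_and] at ht
    obtain ⟨⟨v, rfl⟩, hleaf⟩ := ht
    have hv : deg G v ≠ 1 := fun h => hleaf v h rfl
    obtain ⟨w, hvw⟩ := hδ v
    have : 0 < deg G v := card_pos.2 ⟨w, by simpa using hvw⟩
    obtain ⟨u, hvu, hcu⟩ := hc.exists_adj_eq (v := v) (by omega)
    exact ⟨⟨v, hv⟩, ⟨u, fun h => hleaf u h hcu⟩, hvu, rfl, hcu⟩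
  calc numClasses c ≤ #(univ.image c \ L.image c) + #(L.image c) := card_le_card_sdiff_add_card
    _ ≤ _ := add_le_add hinternal card_image_le

lemma exists_coloring_of_isMatching (hδ : ∀ v, ∃ u, G.Adj v u) {M : G.Subgraph}
    (hM : M.IsMatching) (hMs : M.verts ⊆ {v | deg G v ≠ 1})
    (hcov : ∀ x y, G.Adj x y → deg G x ≠ 1 → deg G y ≠ 1 → x ∈ M.verts ∨ y ∈ M.verts) :
    ∃ κ : V → Sym2 V, (∀ v, 2 ≤ deg G v → ∃ u, G.Adj v u ∧ κ u = κ v) ∧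
      Sym2.diag '' {v | deg G v = 1} ∪ M.edgeSet ⊆ Set.range κ := by
  let P v := deg G v = 1 ∨ v ∈ M.verts
  have hrep v : ∃ r, P r ∧ (P v → r = v) ∧ (¬P v → G.Adj v r) := by
    by_cases hv : P v
    · exact ⟨v, hv, fun _ => rfl, fun h => (h hv).elim⟩
    obtain ⟨hvL, hvM⟩ := not_or.1 hv
    obtain ⟨u, hvu⟩ := hδ v
    refine ⟨u, ?_, fun h => (hv h).elim, fun _ => hvu⟩
    by_cases hu : deg G u = 1
    · exact .inl hu
    · exact .inr ((hcov v u hvu hvL hu).resolve_left hvM)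
  choose r hrP hr_self hr_adj using hrep
  let e v : Sym2 V := if h : v ∈ M.verts then hM.toEdge ⟨v, h⟩ else s(v, v)
  have he_adj {v w} (hvw : M.Adj v w) : e v = s(v, w) := by
    simp [e, hvw.fst_mem, hM.toEdge_eq_of_adj hvw]
  refine ⟨e ∘ r, fun v hv => ?_, ?_⟩
  · by_cases hvM : v ∈ M.verts
    · obtain ⟨w, hvw, -⟩ := hM hvM
      refine ⟨w, M.adj_sub hvw, ?_⟩
      simp only [Function.comp_apply]
      rw [hr_self w (.inr hvw.snd_mem), hr_self v (.inr hvM), he_adj hvw, he_adj hvw.symm,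
        Sym2.eq_swap]
    · have hPv : ¬P v := by simp only [P, hvM, or_false]; omega
      exact ⟨r v, hr_adj v hPv, by simp only [Function.comp_apply, hr_self _ (hrP v)]⟩
  · rintro z (⟨l, hl, rfl⟩ | hz)
    · have hlM : l ∉ M.verts := fun h => hMs h hl
      exact ⟨l, by simp [e, hr_self l (.inl hl), hlM, Sym2.diag]⟩
    · induction z using Sym2.ind with
      | _ x y => exact ⟨x, by simp [hr_self x (.inr hz.fst_mem), he_adj hz]⟩

lemma ncard_edgeSet_add_card_leaves_le_quorumNumber (hΔ : ∀ v, deg G v ≤ 3)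
    (hδ : ∀ v, ∃ u, G.Adj v u) {M : G.Subgraph} (hM : M.IsMatching)
    (hMs : M.verts ⊆ {v | deg G v ≠ 1})
    (hcov : ∀ x y, G.Adj x y → deg G x ≠ 1 → deg G y ≠ 1 → x ∈ M.verts ∨ y ∈ M.verts) :
    M.edgeSet.ncard + #(univ.filter fun v => deg G v = 1) ≤ quorumNumber G := by
  obtain ⟨κ, hκ, hrange⟩ := exists_coloring_of_isMatching hδ hM hMs hcov
  have hdisj : Disjoint (Sym2.diag '' {v | deg G v = 1}) M.edgeSet := by
    refine Set.disjoint_left.2 ?_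
    rintro _ ⟨l, -, rfl⟩ hl
    exact G.not_isDiag_of_mem_edgeSet (M.edgeSet_subset hl) (Sym2.diag_isDiag l)
  calc M.edgeSet.ncard + #(univ.filter fun v => deg G v = 1)
      = (Sym2.diag '' {v | deg G v = 1} ∪ M.edgeSet).ncard := by
        rw [Set.ncard_union_eq hdisj, Set.ncard_image_of_injective _ Sym2.diag_injective, add_comm,
          ← Set.ncard_coe_finset, coe_filter_univ]
    _ ≤ (Set.range κ).ncard := Set.ncard_le_ncard hrange
    _ ≤ quorumNumber G := ncard_range_le_quorumNumber hΔ κ hκ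

end Bounds

/-- for a nontrivial binary tree (max degree at most 3),
`ψ_q(T) = μ(T[V \ L]) + |L|`. -/
theorem quorumNumber_binary_tree {V : Type*} [Fintype V] (G : SimpleGraph V)
    (hT : G.IsTree) (hn : 1 < Fintype.card V) (hΔ : ∀ v : V, deg G v ≤ 3) :
    quorumNumber G =
      matchingNumber (G.induce {v : V | deg G v ≠ 1}) +
        (Finset.univ.filter fun v => deg G v = 1).card := by
  have : Nontrivial V := Fintype.one_lt_card_iff_nontrivial.1 hn
  have hδ : ∀ v, ∃ u, G.Adj v u := hT.connected.preconnected.exists_adj_of_nontrivial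
  refine le_antisymm
    (quorumNumber_le fun c hc => numClasses_le_matchingNumber_add_card_leaves hδ hc) ?_
  obtain ⟨M, hM, hMs, hcard, hcov⟩ :=
    exists_isMatching_verts_subset_ncard_eq_matchingNumber_induce G {v | deg G v ≠ 1}
  rw [← hcard]
  exact ncard_edgeSet_add_card_leaves_le_quorumNumber hΔ hδ hM hMs hcov
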